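/- Assume good X and good X'. Then the following three statements are equivalent: (1) Abs xs x X = Abs xs' x' X'; (2) xs = xs' and there exists y ∉ {x,x'} with fresh xs y X, fresh xs y X' and X[y ∧ x]_xs = X'[y ∧ x']_xs; (3) xs = xs' and for all y ∉ {x,x'}, if fresh xs y X and fresh xs y X' then X[y ∧ x]_xs = X'[y ∧ x']_xs. -/

import Mathlib

/-!
Equality of terms is alpha-equivalence of representatives, because on good quasiterms `Alpha` is
an equivalence relation; then (1) ⟺ (2) is the definition of `AlphaAbs`. The content is
(2) ⟹ (3), independence of the witness: for a fresh `u`,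
`X[u∧x] ≈ X[y∧x][u∧y] ≈ X'[y∧x'][u∧y] ≈ X'[u∧x']`, since swapping two variables fresh for a good
quasiterm yields an alpha-equivalent one. For (3) ⟹ (2) a fresh variable is needed: a good
quasiterm has fewer than `|var|` free variables, by regularity of `|var|`.

Reflexivity, transitivity and the fresh-swap lemma are proved by an induction in which the body of
an abstraction may be swapped, since abstractions are compared through renamed bodies.
-/

open scoped Classical

universe u

section Binding

variable (var varsort index bindex opsym : Type u)

/-! ### Inputs -/

/-- An `(α,β)`-input: a partial function from `α` to `β`. -/
abbrev Input (α β : Type u) : Type u := α → Option β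

/-- The domain of an input. -/
def idom {α β : Type u} (inp : Input α β) : Set α := {a | inp a ≠ none}

/-- The componentwise lifting of a predicate to inputs. -/
def liftP {α β : Type u} (P : β → Prop) (inp : Input α β) : Prop :=
  ∀ a b, inp a = some b → P b

/-- The componentwise lifting of a function to inputs. -/
def liftF {α β γ : Type u} (f : β → γ) (inp : Input α β) : Input α γ :=
  fun a => (inp a).map f

/-- An input is small if its domain has cardinality smaller than that of `var`. -/
def smallDom {α β : Type u} (inp : Input α β) : Prop :=
  Cardinal.mk (idom inp) < Cardinal.mk var

/-! ### Quasiterms -/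

mutual
/-- Quasiterms: raw terms before quotienting by alpha-equivalence. -/
inductive QTerm : Type u where
  | qVar : varsort → var → QTerm
  | qOp : opsym → (index → Option QTerm) → (bindex → Option QAbs) → QTerm
/-- Quasiabstractions. -/
inductive QAbs : Type u where
  | qAbs : varsort → var → QTerm → QAbs
end

/-- Transposition of two variables. -/
noncomputable def swapVar (z1 z2 x : var) : var :=
  if x = z1 then z2 else if x = z2 then z1 else x

/-- Sort-aware transposition of variables (acts only on variables of varsort `zs`). -/
noncomputable def swapVarS (zs xs : varsort) (z1 z2 x : var) : var :=
  if xs = zs then swapVar var z1 z2 x else x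

variable {var varsort index bindex opsym}

/-- Swapping of the variables `z1`, `z2` at varsort `zs` in a quasiterm
(transposing them everywhere, including binding positions). -/
noncomputable def qSwap (z1 z2 : var) (zs : varsort) :
    QTerm var varsort index bindex opsym → QTerm var varsort index bindex opsym :=
  QTerm.rec (motive_1 := fun _ => QTerm var varsort index bindex opsym)
    (motive_2 := fun _ => QAbs var varsort index bindex opsym)
    (motive_3 := fun _ => Option (QTerm var varsort index bindex opsym))
    (motive_4 := fun _ => Option (QAbs var varsort index bindex opsym))
    (fun xs x => .qVar xs (swapVarS var varsort zs xs z1 z2 x))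
    (fun d _ _ rinp rbinp => .qOp d rinp rbinp)
    (fun xs x _ rX => .qAbs xs (swapVarS var varsort zs xs z1 z2 x) rX)
    none (fun _ r => some r) none (fun _ r => some r)

/-- Swapping of variables in a quasiabstraction. -/
noncomputable def qSwapAbs (z1 z2 : var) (zs : varsort) :
    QAbs var varsort index bindex opsym → QAbs var varsort index bindex opsym
  | .qAbs xs x X => .qAbs xs (swapVarS var varsort zs xs z1 z2 x) (qSwap z1 z2 zs X)

/-! ### Freshness and goodness -/

mutual
/-- `QFresh ys y X`: the variable `y` of varsort `ys` has no free occurrence in `X`. -/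
inductive QFresh : varsort → var → QTerm var varsort index bindex opsym → Prop where
  | qVar : ∀ {ys y xs x}, (ys, y) ≠ (xs, x) → QFresh ys y (.qVar xs x)
  | qOp : ∀ {ys y d inp binp}, (∀ i X, inp i = some X → QFresh ys y X) →
      (∀ j A, binp j = some A → QFreshAbs ys y A) → QFresh ys y (.qOp d inp binp)
/-- Freshness for quasiabstractions. -/
inductive QFreshAbs : varsort → var → QAbs var varsort index bindex opsym → Prop where
  | qAbs_bound : ∀ {xs x X}, QFreshAbs xs x (.qAbs xs x X)
  | qAbs_body : ∀ {ys y xs x X}, QFresh ys y X → QFreshAbs ys y (.qAbs xs x X)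
end

mutual
/-- Good quasiterms: all constructors branch less than `|var|`. -/
inductive QGood : QTerm var varsort index bindex opsym → Prop where
  | qVar : ∀ {xs x}, QGood (.qVar xs x)
  | qOp : ∀ {d inp binp}, (∀ i X, inp i = some X → QGood X) →
      (∀ j A, binp j = some A → QGoodAbs A) →
      smallDom var inp → smallDom var binp → QGood (.qOp d inp binp)
/-- Good quasiabstractions. -/
inductive QGoodAbs : QAbs var varsort index bindex opsym → Prop where
  | qAbs : ∀ {xs x X}, QGood X → QGoodAbs (.qAbs xs x X)
end

/-! ### Alpha-equivalence -/

mutual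
/-- Alpha-equivalence of quasiterms. -/
inductive Alpha : QTerm var varsort index bindex opsym →
    QTerm var varsort index bindex opsym → Prop where
  | qVar : ∀ {xs x}, Alpha (.qVar xs x) (.qVar xs x)
  | qOp : ∀ {d inp binp inp' binp'},
      (∀ i, inp i = none ↔ inp' i = none) →
      (∀ i X X', inp i = some X → inp' i = some X' → Alpha X X') →
      (∀ j, binp j = none ↔ binp' j = none) →
      (∀ j A A', binp j = some A → binp' j = some A' → AlphaAbs A A') →
      Alpha (.qOp d inp binp) (.qOp d inp' binp')
/-- Alpha-equivalence of quasiabstractions (the exists-fresh formulation). -/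
inductive AlphaAbs : QAbs var varsort index bindex opsym →
    QAbs var varsort index bindex opsym → Prop where
  | qAbs : ∀ {xs x x' X X' y}, y ∉ ({x, x'} : Set var) →
      QFresh xs y X → QFresh xs y X' →
      Alpha (qSwap y x xs X) (qSwap y x' xs X') →
      AlphaAbs (.qAbs xs x X) (.qAbs xs x' X')
end

/-! ### Terms and abstractions as quotients -/

variable (var varsort index bindex opsym)

/-- Terms: quasiterms modulo alpha-equivalence. -/
def Term : Type u := Quot (@Alpha var varsort index bindex opsym)

/-- Abstractions: quasiabstractions modulo alpha-equivalence. -/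
def Abstr : Type u := Quot (@AlphaAbs var varsort index bindex opsym)

variable {var varsort index bindex opsym}

/-- The projection from quasiterms to terms. -/
def tmk : QTerm var varsort index bindex opsym → Term var varsort index bindex opsym :=
  Quot.mk _

/-- The projection from quasiabstractions to abstractions. -/
def amk : QAbs var varsort index bindex opsym → Abstr var varsort index bindex opsym :=
  Quot.mk _

/-- A representative of a term. -/
noncomputable def trep (X : Term var varsort index bindex opsym) :
    QTerm var varsort index bindex opsym := Quot.out X

/-- A representative of an abstraction. -/
noncomputable def arep (A : Abstr var varsort index bindex opsym) :
    QAbs var varsort index bindex opsym := Quot.out A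

/-- Good terms. -/
def good (X : Term var varsort index bindex opsym) : Prop := QGood (trep X)

/-- Good abstractions. -/
def goodAbs (A : Abstr var varsort index bindex opsym) : Prop := QGoodAbs (arep A)

/-- The variable-injection constructor on terms. -/
def Var (xs : varsort) (x : var) : Term var varsort index bindex opsym :=
  tmk (.qVar xs x)

/-- The operation constructor on terms. -/
noncomputable def Op (d : opsym) (inp : Input index (Term var varsort index bindex opsym))
    (binp : Input bindex (Abstr var varsort index bindex opsym)) :
    Term var varsort index bindex opsym :=
  tmk (.qOp d (liftF trep inp) (liftF arep binp))

/-- The abstraction constructor. -/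
noncomputable def Abs (xs : varsort) (x : var) (X : Term var varsort index bindex opsym) :
    Abstr var varsort index bindex opsym :=
  amk (.qAbs xs x (trep X))

/-- Freshness on terms. -/
def fresh (ys : varsort) (y : var) (X : Term var varsort index bindex opsym) : Prop :=
  QFresh ys y (trep X)

/-- Freshness on abstractions. -/
def freshAbs (ys : varsort) (y : var) (A : Abstr var varsort index bindex opsym) : Prop :=
  QFreshAbs ys y (arep A)

/-- Swapping on terms. -/
noncomputable def tswap (X : Term var varsort index bindex opsym)
    (z1 z2 : var) (zs : varsort) : Term var varsort index bindex opsym :=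
  tmk (qSwap z1 z2 zs (trep X))

/-! ### Substitution -/

mutual
/-- The graph of capture-avoiding substitution on quasiterms:
`QSubst X Y y ys Z` means that `Z` is a result of substituting `Y` for the free
occurrences of the variable `y` of varsort `ys` in `X` (along a capture-free
representative). -/
inductive QSubst : QTerm var varsort index bindex opsym →
    QTerm var varsort index bindex opsym → var → varsort →
    QTerm var varsort index bindex opsym → Prop where
  | var_eq : ∀ {Y y ys}, QSubst (.qVar ys y) Y y ys Y
  | var_ne : ∀ {Y y ys xs x}, (xs, x) ≠ (ys, y) → QSubst (.qVar xs x) Y y ys (.qVar xs x)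
  | op : ∀ {Y y ys d inp binp inp' binp'},
      (∀ i, inp i = none ↔ inp' i = none) →
      (∀ i X X', inp i = some X → inp' i = some X' → QSubst X Y y ys X') →
      (∀ j, binp j = none ↔ binp' j = none) →
      (∀ j A A', binp j = some A → binp' j = some A' → QSubstAbs A Y y ys A') →
      QSubst (.qOp d inp binp) Y y ys (.qOp d inp' binp')
/-- The graph of capture-avoiding substitution on quasiabstractions. -/
inductive QSubstAbs : QAbs var varsort index bindex opsym →
    QTerm var varsort index bindex opsym → var → varsort →
    QAbs var varsort index bindex opsym → Prop where
  | abs : ∀ {Y y ys xs x X X'}, (xs, x) ≠ (ys, y) → QFresh xs x Y →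
      QSubst X Y y ys X' → QSubstAbs (.qAbs xs x X) Y y ys (.qAbs xs x X')
end

/-- The graph of capture-avoiding substitution on terms. -/
def SubstRel (X Y : Term var varsort index bindex opsym) (y : var) (ys : varsort)
    (Z : Term var varsort index bindex opsym) : Prop :=
  ∃ qX qZ, tmk qX = X ∧ tmk qZ = Z ∧ QSubst qX (trep Y) y ys qZ

/-- Capture-avoiding substitution on terms: `subst X Y y ys` is `X[Y/y]_ys`. -/
noncomputable def subst (X Y : Term var varsort index bindex opsym)
    (y : var) (ys : varsort) : Term var varsort index bindex opsym :=
  if h : ∃ Z, SubstRel X Y y ys Z then h.choose else X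

/-- The graph of capture-avoiding substitution on abstractions. -/
def SubstAbsRel (A : Abstr var varsort index bindex opsym)
    (Y : Term var varsort index bindex opsym) (y : var) (ys : varsort)
    (B : Abstr var varsort index bindex opsym) : Prop :=
  ∃ qA qB, amk qA = A ∧ amk qB = B ∧ QSubstAbs qA (trep Y) y ys qB

/-- Capture-avoiding substitution on abstractions: `substAbs A Y y ys` is `A[Y/y]_ys`. -/
noncomputable def substAbs (A : Abstr var varsort index bindex opsym)
    (Y : Term var varsort index bindex opsym) (y : var) (ys : varsort) :
    Abstr var varsort index bindex opsym :=
  if h : ∃ B, SubstAbsRel A Y y ys B then h.choose else A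

/-! ### Parallel substitution -/

mutual
/-- The graph of capture-avoiding parallel substitution on quasiterms, along an
assignment `ρ : varsort → var → Option qterm`. -/
inductive QPSubst : QTerm var varsort index bindex opsym →
    (varsort → var → Option (QTerm var varsort index bindex opsym)) →
    QTerm var varsort index bindex opsym → Prop where
  | var_some : ∀ {ρ xs x Y}, ρ xs x = some Y → QPSubst (.qVar xs x) ρ Y
  | var_none : ∀ {ρ xs x}, ρ xs x = none → QPSubst (.qVar xs x) ρ (.qVar xs x)
  | op : ∀ {ρ d inp binp inp' binp'},
      (∀ i, inp i = none ↔ inp' i = none) →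
      (∀ i X X', inp i = some X → inp' i = some X' → QPSubst X ρ X') →
      (∀ j, binp j = none ↔ binp' j = none) →
      (∀ j A A', binp j = some A → binp' j = some A' → QPSubstAbs A ρ A') →
      QPSubst (.qOp d inp binp) ρ (.qOp d inp' binp')
/-- The graph of capture-avoiding parallel substitution on quasiabstractions. -/
inductive QPSubstAbs : QAbs var varsort index bindex opsym →
    (varsort → var → Option (QTerm var varsort index bindex opsym)) →
    QAbs var varsort index bindex opsym → Prop where
  | abs : ∀ {ρ xs x X X'}, ρ xs x = none →
      (∀ ys y Y, ρ ys y = some Y → QFresh xs x Y) →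
      QPSubst X ρ X' → QPSubstAbs (.qAbs xs x X) ρ (.qAbs xs x X')
end

/-- Turning a term-valued assignment into a quasiterm-valued one, by picking
representatives. -/
noncomputable def qassign (ρ : varsort → var → Option (Term var varsort index bindex opsym)) :
    varsort → var → Option (QTerm var varsort index bindex opsym) :=
  fun xs x => (ρ xs x).map trep

/-- The graph of parallel substitution on terms. -/
def PSubstRel (X : Term var varsort index bindex opsym)
    (ρ : varsort → var → Option (Term var varsort index bindex opsym))
    (Z : Term var varsort index bindex opsym) : Prop :=
  ∃ qX qZ, tmk qX = X ∧ tmk qZ = Z ∧ QPSubst qX (qassign ρ) qZ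

/-- Capture-avoiding parallel substitution on terms: `psubst X ρ` is `X[ρ]`. -/
noncomputable def psubst (X : Term var varsort index bindex opsym)
    (ρ : varsort → var → Option (Term var varsort index bindex opsym)) :
    Term var varsort index bindex opsym :=
  if h : ∃ Z, PSubstRel X ρ Z then h.choose else X

/-- The graph of parallel substitution on abstractions. -/
def PSubstAbsRel (A : Abstr var varsort index bindex opsym)
    (ρ : varsort → var → Option (Term var varsort index bindex opsym))
    (B : Abstr var varsort index bindex opsym) : Prop :=
  ∃ qA qB, amk qA = A ∧ amk qB = B ∧ QPSubstAbs qA (qassign ρ) qB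

/-- Capture-avoiding parallel substitution on abstractions. -/
noncomputable def psubstAbs (A : Abstr var varsort index bindex opsym)
    (ρ : varsort → var → Option (Term var varsort index bindex opsym)) :
    Abstr var varsort index bindex opsym :=
  if h : ∃ B, PSubstAbsRel A ρ B then h.choose else A

theorem QTerm.mutual_induction {P : QTerm var varsort index bindex opsym → Prop}
    {Q : QAbs var varsort index bindex opsym → Prop}
    (qVar : ∀ xs x, P (.qVar xs x))
    (qOp : ∀ d inp binp, (∀ i X, inp i = some X → P X) →
      (∀ j A, binp j = some A → Q A) → P (.qOp d inp binp))
    (qAbs : ∀ xs x X, P X → Q (.qAbs xs x X)) :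
    (∀ X, P X) ∧ (∀ A, Q A) :=
  ⟨fun X => QTerm.rec (motive_3 := fun o => ∀ X, o = some X → P X)
      (motive_4 := fun o => ∀ A, o = some A → Q A) qVar qOp qAbs
      (fun _ h => nomatch h) (fun _ h _ e => Option.some.inj e ▸ h)
      (fun _ h => nomatch h) (fun _ h _ e => Option.some.inj e ▸ h) X,
    fun A => QAbs.rec (motive_3 := fun o => ∀ X, o = some X → P X)
      (motive_4 := fun o => ∀ A, o = some A → Q A) qVar qOp qAbs
      (fun _ h => nomatch h) (fun _ h _ e => Option.some.inj e ▸ h)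
      (fun _ h => nomatch h) (fun _ h _ e => Option.some.inj e ▸ h) A⟩

theorem swapVar_eq_swap (a b x : var) : swapVar var a b x = Equiv.swap a b x := rfl

theorem swapVarS_of_eq {zs xs : varsort} (h : xs = zs) (a b x : var) :
    swapVarS var varsort zs xs a b x = Equiv.swap a b x := by
  simp [swapVarS, h, swapVar_eq_swap]

theorem swapVarS_of_ne {zs xs : varsort} (h : xs ≠ zs) (a b x : var) :
    swapVarS var varsort zs xs a b x = x := by
  simp [swapVarS, h]

theorem swapVarS_self (zs : varsort) (a b x : var) :
    swapVarS var varsort zs zs a b x = Equiv.swap a b x := swapVarS_of_eq rfl a b x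

theorem swapVarS_swapVarS (zs xs : varsort) (a b x : var) :
    swapVarS var varsort zs xs a b (swapVarS var varsort zs xs a b x) = x := by
  by_cases h : xs = zs <;> simp [swapVarS_of_eq, swapVarS_of_ne, h]

theorem swapVarS_injective (zs xs : varsort) (a b : var) :
    Function.Injective (swapVarS var varsort zs xs a b) :=
  Function.LeftInverse.injective (swapVarS_swapVarS zs xs a b)

theorem swapVarS_of_ne_of_ne (zs xs : varsort) {a b x : var} (ha : x ≠ a) (hb : x ≠ b) :
    swapVarS var varsort zs xs a b x = x := by
  by_cases h : xs = zs <;>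
    simp [swapVarS_of_eq, swapVarS_of_ne, h, Equiv.swap_apply_of_ne_of_ne ha hb]

theorem swapVarS_swapVarS_conj (zs zs' xs : varsort) (a b c d v : var) :
    swapVarS var varsort zs xs a b (swapVarS var varsort zs' xs c d v)
      = swapVarS var varsort zs' xs (swapVarS var varsort zs zs' a b c)
          (swapVarS var varsort zs zs' a b d) (swapVarS var varsort zs xs a b v) := by
  by_cases h : xs = zs <;> by_cases h' : xs = zs'
  · subst h h'
    simp only [swapVarS_self]
    exact (Equiv.swap a b).injective.map_swap c d v
  · simp only [swapVarS_of_eq h, swapVarS_of_ne h']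
  · subst h'
    simp only [swapVarS_of_ne h, swapVarS_self]
  · simp only [swapVarS_of_ne h, swapVarS_of_ne h']

section Swapping

variable (a b : var) (zs : varsort)

@[simp] theorem qSwap_qVar (xs : varsort) (x : var) :
    qSwap (index := index) (bindex := bindex) (opsym := opsym) a b zs (.qVar xs x)
      = .qVar xs (swapVarS var varsort zs xs a b x) := rfl

@[simp] theorem qSwap_qOp (d : opsym)
    (inp : index → Option (QTerm var varsort index bindex opsym))
    (binp : bindex → Option (QAbs var varsort index bindex opsym)) :
    qSwap a b zs (.qOp d inp binp)
      = .qOp d (fun i => (inp i).map (qSwap a b zs))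
          (fun j => (binp j).map (qSwapAbs a b zs)) := by
  change QTerm.qOp d _ _ = _
  congr 1 <;> funext i
  · cases inp i <;> rfl
  · rcases binp i with _ | ⟨_, _, _⟩ <;> rfl

@[simp] theorem qSwapAbs_qAbs (xs : varsort) (x : var)
    (X : QTerm var varsort index bindex opsym) :
    qSwapAbs a b zs (.qAbs xs x X)
      = .qAbs xs (swapVarS var varsort zs xs a b x) (qSwap a b zs X) := rfl

end Swapping

theorem qSwap_qSwap_and :
    (∀ X : QTerm var varsort index bindex opsym,
      ∀ a b zs, qSwap a b zs (qSwap a b zs X) = X) ∧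
    (∀ A : QAbs var varsort index bindex opsym,
      ∀ a b zs, qSwapAbs a b zs (qSwapAbs a b zs A) = A) := by
  apply QTerm.mutual_induction
  · intro xs x a b zs
    simp [swapVarS_swapVarS]
  · intro d inp binp ih ih' a b zs
    simp only [qSwap_qOp, Option.map_map]
    congr 1 <;> funext i
    · exact (Option.map_congr fun X h => ih i X h a b zs).trans Option.map_id'
    · exact (Option.map_congr fun A h => ih' i A h a b zs).trans Option.map_id'
  · intro xs x X ih a b zs
    simp [swapVarS_swapVarS, ih]

@[simp] theorem qSwap_qSwap (a b : var) (zs : varsort) (X : QTerm var varsort index bindex opsym) :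
    qSwap a b zs (qSwap a b zs X) = X :=
  qSwap_qSwap_and.1 X a b zs

theorem qSwap_qSwap_conj_and :
    (∀ X : QTerm var varsort index bindex opsym, ∀ a b c d zs zs',
      qSwap a b zs (qSwap c d zs' X)
        = qSwap (swapVarS var varsort zs zs' a b c) (swapVarS var varsort zs zs' a b d) zs'
            (qSwap a b zs X)) ∧
    (∀ A : QAbs var varsort index bindex opsym, ∀ a b c d zs zs',
      qSwapAbs a b zs (qSwapAbs c d zs' A)
        = qSwapAbs (swapVarS var varsort zs zs' a b c) (swapVarS var varsort zs zs' a b d) zs'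
            (qSwapAbs a b zs A)) := by
  apply QTerm.mutual_induction
  · intro xs x a b c d zs zs'
    simp only [qSwap_qVar]
    rw [swapVarS_swapVarS_conj]
  · intro d0 inp binp ih ih' a b c d zs zs'
    simp only [qSwap_qOp, Option.map_map]
    congr 1 <;> funext i
    · exact Option.map_congr fun X h => ih i X h a b c d zs zs'
    · exact Option.map_congr fun A h => ih' i A h a b c d zs zs'
  · intro xs x X ih a b c d zs zs'
    simp only [qSwapAbs_qAbs]
    rw [swapVarS_swapVarS_conj, ih]

theorem qSwap_qSwap_conj (X : QTerm var varsort index bindex opsym) (a b c d : var)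
    (zs zs' : varsort) :
    qSwap a b zs (qSwap c d zs' X)
      = qSwap (swapVarS var varsort zs zs' a b c) (swapVarS var varsort zs zs' a b d) zs'
          (qSwap a b zs X) :=
  qSwap_qSwap_conj_and.1 X a b c d zs zs'

theorem qSwap_qSwap_of_ne {X : QTerm var varsort index bindex opsym} {u x y : var}
    {xs : varsort} (hxu : x ≠ u) (hxy : x ≠ y) :
    qSwap u y xs (qSwap y x xs X) = qSwap u x xs (qSwap u y xs X) := by
  rw [qSwap_qSwap_conj, swapVarS_self, swapVarS_self, Equiv.swap_apply_right,
    Equiv.swap_apply_of_ne_of_ne hxu hxy]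

section SwapInduction

variable (l : List (var × var × varsort))

noncomputable def qSwaps (X : QTerm var varsort index bindex opsym) :
    QTerm var varsort index bindex opsym :=
  l.foldr (fun p Y => qSwap p.1 p.2.1 p.2.2 Y) X

noncomputable def qSwapsAbs (A : QAbs var varsort index bindex opsym) :
    QAbs var varsort index bindex opsym :=
  l.foldr (fun p B => qSwapAbs p.1 p.2.1 p.2.2 B) A

theorem exists_qSwaps_qVar (xs : varsort) (x : var) :
    ∃ y, qSwaps (index := index) (bindex := bindex) (opsym := opsym) l (.qVar xs x)
      = .qVar xs y := by
  induction l with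
  | nil => exact ⟨x, rfl⟩
  | cons p l ih =>
    obtain ⟨y, hy⟩ := ih
    exact ⟨_, congrArg (qSwap p.1 p.2.1 p.2.2) hy⟩

theorem qSwaps_qOp (d : opsym) (inp : index → Option (QTerm var varsort index bindex opsym))
    (binp : bindex → Option (QAbs var varsort index bindex opsym)) :
    qSwaps l (.qOp d inp binp)
      = .qOp d (fun i => (inp i).map (qSwaps l)) (fun j => (binp j).map (qSwapsAbs l)) := by
  induction l with
  | nil =>
    change QTerm.qOp d inp binp = _
    congr 1 <;> funext i <;> exact Option.map_id'.symm
  | cons p l ih =>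
    change qSwap p.1 p.2.1 p.2.2 (qSwaps l _) = _
    simp only [ih, qSwap_qOp, Option.map_map]
    rfl

theorem exists_qSwapsAbs_qAbs (xs : varsort) (x : var)
    (X : QTerm var varsort index bindex opsym) :
    ∃ y, qSwapsAbs l (.qAbs xs x X) = .qAbs xs y (qSwaps l X) := by
  induction l with
  | nil => exact ⟨x, rfl⟩
  | cons p l ih =>
    obtain ⟨y, hy⟩ := ih
    exact ⟨_, congrArg (qSwapAbs p.1 p.2.1 p.2.2) hy⟩

end SwapInduction

/-- A swapped body is not a subterm, but it has the shape of one, so the induction is still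
structural (on the body together with a list of pending swaps). -/
theorem QTerm.swap_induction {P : QTerm var varsort index bindex opsym → Prop}
    {Q : QAbs var varsort index bindex opsym → Prop}
    (qVar : ∀ xs x, P (.qVar xs x))
    (qOp : ∀ d inp binp, (∀ i X, inp i = some X → P X) →
      (∀ j A, binp j = some A → Q A) → P (.qOp d inp binp))
    (qAbs : ∀ xs x X, (∀ a b zs, P (qSwap a b zs X)) → Q (.qAbs xs x X)) :
    (∀ X, P X) ∧ (∀ A, Q A) := by
  suffices h : (∀ X, ∀ l, P (qSwaps l X)) ∧ (∀ A, ∀ l, Q (qSwapsAbs l A)) from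
    ⟨fun X => h.1 X [], fun A => h.2 A []⟩
  apply QTerm.mutual_induction
  · intro xs x l
    obtain ⟨y, hy⟩ := exists_qSwaps_qVar l xs x
    exact hy ▸ qVar xs y
  · intro d inp binp ih ih' l
    rw [qSwaps_qOp]
    refine qOp d _ _ (fun i X h => ?_) (fun j A h => ?_)
    · obtain ⟨X0, h0, rfl⟩ := Option.map_eq_some_iff.1 h
      exact ih i X0 h0 l
    · obtain ⟨A0, h0, rfl⟩ := Option.map_eq_some_iff.1 h
      exact ih' j A0 h0 l
  · intro xs x X ih l
    obtain ⟨y, hy⟩ := exists_qSwapsAbs_qAbs l xs x X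
    exact hy ▸ qAbs xs y _ fun a b zs => ih ((a, b, zs) :: l)

section Freshness

variable {ys : varsort} {y : var}

theorem qFreshAbs_qAbs_iff {xs : varsort} {x : var} {X : QTerm var varsort index bindex opsym} :
    QFreshAbs ys y (.qAbs xs x X) ↔ (ys, y) = (xs, x) ∨ QFresh ys y X := by
  constructor
  · rintro (_ | h)
    · exact Or.inl rfl
    · exact Or.inr h
  · rintro (h | h)
    · obtain ⟨rfl, rfl⟩ := Prod.mk.inj h
      exact .qAbs_bound
    · exact .qAbs_body h

theorem QFresh.qSwap {X : QTerm var varsort index bindex opsym} (h : QFresh ys y X)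
    (a b : var) (zs : varsort) :
    QFresh ys (swapVarS var varsort zs ys a b y) (_root_.qSwap a b zs X) := by
  induction h using QFresh.rec
    (motive_2 := fun A _ => QFreshAbs ys (swapVarS var varsort zs ys a b y) (qSwapAbs a b zs A))
    with
  | qVar hne =>
    refine .qVar fun he => hne ?_
    obtain ⟨rfl, hx⟩ := Prod.mk.inj he
    rw [swapVarS_injective _ _ _ _ hx]
  | qOp _ _ ih ih' =>
    rw [qSwap_qOp]
    refine .qOp (fun i X h => ?_) (fun j A h => ?_)
    · obtain ⟨X0, h0, rfl⟩ := Option.map_eq_some_iff.1 h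
      exact ih i X0 h0
    · obtain ⟨A0, h0, rfl⟩ := Option.map_eq_some_iff.1 h
      exact ih' j A0 h0
  | qAbs_bound => exact .qAbs_bound
  | qAbs_body _ ih => exact .qAbs_body ih

theorem qFresh_qSwap_iff {X : QTerm var varsort index bindex opsym} {a b : var} {zs : varsort} :
    QFresh ys y (qSwap a b zs X) ↔ QFresh ys (swapVarS var varsort zs ys a b y) X :=
  ⟨fun h => by simpa using h.qSwap a b zs,
    fun h => by simpa [swapVarS_swapVarS] using h.qSwap a b zs⟩

theorem qFreshAbs_qAbs_iff_of_qFresh {xs : varsort} {x w : var}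
    {X : QTerm var varsort index bindex opsym} (hw : QFresh xs w X) :
    QFreshAbs ys y (.qAbs xs x X) ↔ (ys, y) = (xs, w) ∨ QFresh ys y (qSwap w x xs X) := by
  rw [qFreshAbs_qAbs_iff, qFresh_qSwap_iff]
  by_cases hs : ys = xs
  · subst hs
    rw [swapVarS_self]
    by_cases hyw : y = w
    · subst hyw
      simp [hw]
    by_cases hyx : y = x
    · subst hyx
      simp [hw]
    · simp [hyw, hyx, Equiv.swap_apply_of_ne_of_ne hyw hyx]
  · simp [hs, swapVarS_of_ne hs]

end Freshness

theorem idom_map {α β γ : Type u} (inp : Input α β) (f : β → γ) :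
    idom (fun a => (inp a).map f) = idom inp := by
  ext a
  simp [idom]

theorem QGood.qSwap {X : QTerm var varsort index bindex opsym} (h : QGood X)
    (a b : var) (zs : varsort) : QGood (_root_.qSwap a b zs X) := by
  induction h using QGood.rec (motive_2 := fun A _ => QGoodAbs (qSwapAbs a b zs A)) with
  | qVar => exact .qVar
  | qOp _ _ hs hs' ih ih' =>
    rw [qSwap_qOp]
    refine .qOp (fun i X h => ?_) (fun j A h => ?_) ?_ ?_
    · obtain ⟨X0, h0, rfl⟩ := Option.map_eq_some_iff.1 h
      exact ih i X0 h0
    · obtain ⟨A0, h0, rfl⟩ := Option.map_eq_some_iff.1 h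
      exact ih' j A0 h0
    · rwa [smallDom, idom_map]
    · rwa [smallDom, idom_map]
  | qAbs _ ih => exact .qAbs ih

@[simp] theorem qGood_qSwap_iff {X : QTerm var varsort index bindex opsym} {a b : var}
    {zs : varsort} : QGood (qSwap a b zs X) ↔ QGood X :=
  ⟨fun h => by simpa using h.qSwap a b zs, fun h => h.qSwap a b zs⟩

theorem not_mem_pair_swapVarS {zs xs : varsort} {a b x x' y : var}
    (hy : y ∉ ({x, x'} : Set var)) :
    swapVarS var varsort zs xs a b y ∉
      ({swapVarS var varsort zs xs a b x, swapVarS var varsort zs xs a b x'} : Set var) := by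
  simpa [(swapVarS_injective zs xs a b).eq_iff] using hy

section Alpha

variable {X Y : QTerm var varsort index bindex opsym} {A B : QAbs var varsort index bindex opsym}

theorem Alpha.qSwap (h : Alpha X Y) (a b : var) (zs : varsort) :
    Alpha (_root_.qSwap a b zs X) (_root_.qSwap a b zs Y) := by
  induction h using Alpha.rec
    (motive_2 := fun A B _ => AlphaAbs (qSwapAbs a b zs A) (qSwapAbs a b zs B)) with
  | qVar => exact .qVar
  | qOp hd _ hbd _ ih ih' =>
    rw [qSwap_qOp, qSwap_qOp]
    refine .qOp (fun i => by simp [hd i]) (fun i Z Z' h h' => ?_)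
      (fun j => by simp [hbd j]) (fun j C C' h h' => ?_)
    · obtain ⟨X0, h0, rfl⟩ := Option.map_eq_some_iff.1 h
      obtain ⟨X1, h1, rfl⟩ := Option.map_eq_some_iff.1 h'
      exact ih i X0 X1 h0 h1
    · obtain ⟨A0, h0, rfl⟩ := Option.map_eq_some_iff.1 h
      obtain ⟨A1, h1, rfl⟩ := Option.map_eq_some_iff.1 h'
      exact ih' j A0 A1 h0 h1
  | @qAbs xs x x' X X' y hy hf hf' _ ih =>
    rw [qSwap_qSwap_conj X, qSwap_qSwap_conj X'] at ih
    exact .qAbs (not_mem_pair_swapVarS hy) (hf.qSwap a b zs) (hf'.qSwap a b zs) ih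

theorem Alpha.symm (h : Alpha X Y) : Alpha Y X := by
  induction h using Alpha.rec (motive_2 := fun A B _ => AlphaAbs B A) with
  | qVar => exact .qVar
  | qOp hd _ hbd _ ih ih' =>
    exact .qOp (fun i => (hd i).symm) (fun i Z Z' h h' => ih i Z' Z h' h)
      (fun j => (hbd j).symm) (fun j C C' h h' => ih' j C' C h' h)
  | qAbs hy hf hf' _ ih => exact .qAbs (Set.pair_comm _ _ ▸ hy) hf' hf ih

theorem AlphaAbs.symm (h : AlphaAbs A B) : AlphaAbs B A := by
  obtain ⟨hy, hf, hf', h⟩ := h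
  exact .qAbs (Set.pair_comm _ _ ▸ hy) hf' hf h.symm

theorem Alpha.qGood (h : Alpha X Y) (hX : QGood X) : QGood Y := by
  revert hX
  induction h using Alpha.rec (motive_2 := fun A B _ => QGoodAbs A → QGoodAbs B) with
  | qVar => exact id
  | @qOp d inp binp inp' binp' hd _ hbd _ ih ih' =>
    intro hX
    cases hX with | qOp hg hg' hs hs' => ?_
    have hdom : idom inp' = idom inp := Set.ext fun i => not_congr (hd i).symm
    have hbdom : idom binp' = idom binp := Set.ext fun j => not_congr (hbd j).symm
    refine .qOp (fun i X' h' => ?_) (fun j A' h' => ?_) (by rwa [smallDom, hdom])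
      (by rwa [smallDom, hbdom])
    · obtain ⟨X, h⟩ := Option.ne_none_iff_exists'.1 fun hn => by simp [(hd i).1 hn] at h'
      exact ih i X X' h h' (hg i X h)
    · obtain ⟨A, h⟩ := Option.ne_none_iff_exists'.1 fun hn => by simp [(hbd j).1 hn] at h'
      exact ih' j A A' h h' (hg' j A h)
  | qAbs _ _ _ _ ih hA =>
    obtain ⟨hX⟩ := hA
    exact .qAbs (qGood_qSwap_iff.1 (ih (hX.qSwap _ _ _)))

end Alpha

section FreshSupply

variable (hreg : (Cardinal.mk var).IsRegular)

instance cocardinal_neBot : (Filter.cocardinal var hreg).NeBot := by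
  simpa using
    (Filter.cocardinal_inf_principal_neBot_iff (hreg := hreg) (s := Set.univ)).2 (by simp)

theorem eventually_forall_input {α β : Type u} {inp : Input α β} (hs : smallDom var inp)
    {p : var → β → Prop}
    (h : ∀ a b, inp a = some b → ∀ᶠ u in Filter.cocardinal var hreg, p u b) :
    ∀ᶠ u in Filter.cocardinal var hreg, ∀ a b, inp a = some b → p u b := by
  have key :
      ∀ᶠ u in Filter.cocardinal var hreg, ∀ a ∈ idom inp, ∀ b, inp a = some b → p u b := by
    refine (Filter.eventually_cardinal_ball hs).2 fun a ha => ?_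
    obtain ⟨b, hb⟩ := Option.ne_none_iff_exists'.1 ha
    filter_upwards [h a b hb] with u hu b' hb'
    rwa [← Option.some.inj (hb.symm.trans hb')]
  filter_upwards [key] with u hu a b hb
  exact hu a (by simp [idom, hb]) b hb

variable {hreg}

theorem QGood.eventually_qFresh {X : QTerm var varsort index bindex opsym} (h : QGood X)
    (ys : varsort) : ∀ᶠ u in Filter.cocardinal var hreg, QFresh ys u X := by
  induction h using QGood.rec
    (motive_2 := fun A _ => ∀ᶠ u in Filter.cocardinal var hreg, QFreshAbs ys u A) with
  | @qVar xs x =>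
    filter_upwards [Filter.eventually_cocardinal_ne x] with u hu
    exact .qVar fun he => hu (Prod.mk.inj he).2
  | qOp _ _ hs hs' ih ih' =>
    filter_upwards [eventually_forall_input hreg hs ih, eventually_forall_input hreg hs' ih']
      with u hu hu'
    exact .qOp hu hu'
  | qAbs _ ih => exact ih.mono fun u hu => .qAbs_body hu

end FreshSupply

theorem alpha_refl_and (hreg : (Cardinal.mk var).IsRegular) :
    (∀ X : QTerm var varsort index bindex opsym, QGood X → Alpha X X) ∧
    (∀ A : QAbs var varsort index bindex opsym, QGoodAbs A → AlphaAbs A A) := by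
  apply QTerm.swap_induction
  · exact fun _ _ _ => .qVar
  · intro d inp binp ih ih' hg
    cases hg with | qOp hg hg' _ _ => ?_
    refine .qOp (fun _ => Iff.rfl) (fun i X X' h h' => ?_) (fun _ => Iff.rfl)
      (fun j A A' h h' => ?_)
    · cases h.symm.trans h'
      exact ih i X h (hg i X h)
    · cases h.symm.trans h'
      exact ih' j A h (hg' j A h)
  · rintro xs x X ih ⟨hX⟩
    obtain ⟨u, hux, hu⟩ :=
      ((Filter.eventually_cocardinal_ne x).and (hX.eventually_qFresh (hreg := hreg) xs)).exists
    exact .qAbs (by simpa using hux) hu hu (ih u x xs (hX.qSwap u x xs))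

theorem alpha_refl (hreg : (Cardinal.mk var).IsRegular)
    {X : QTerm var varsort index bindex opsym} (hX : QGood X) : Alpha X X :=
  (alpha_refl_and hreg).1 X hX

theorem alpha_qSwap_of_qFresh_and (hreg : (Cardinal.mk var).IsRegular) :
    (∀ X : QTerm var varsort index bindex opsym, ∀ z₁ z₂ zs, QGood X →
      QFresh zs z₁ X → QFresh zs z₂ X → Alpha (qSwap z₁ z₂ zs X) X) ∧
    (∀ A : QAbs var varsort index bindex opsym, ∀ z₁ z₂ zs, QGoodAbs A →
      QFreshAbs zs z₁ A → QFreshAbs zs z₂ A → AlphaAbs (qSwapAbs z₁ z₂ zs A) A) := by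
  apply QTerm.swap_induction
  · rintro xs x z₁ z₂ zs - ⟨h₁⟩ ⟨h₂⟩
    rw [qSwap_qVar]
    by_cases hs : xs = zs
    · subst hs
      rw [swapVarS_self, Equiv.swap_apply_of_ne_of_ne (fun h => h₁ (by rw [h]))
        (fun h => h₂ (by rw [h]))]
      exact .qVar
    · rw [swapVarS_of_ne hs]
      exact .qVar
  · intro d inp binp ih ih' z₁ z₂ zs hg h₁ h₂
    cases hg with | qOp hg hg' _ _ => ?_
    cases h₁ with | qOp h₁ h₁' => ?_
    cases h₂ with | qOp h₂ h₂' => ?_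
    rw [qSwap_qOp]
    refine .qOp (fun i => by simp) (fun i Z X h h' => ?_) (fun j => by simp)
      (fun j C A h h' => ?_)
    · rw [h'] at h
      cases h
      exact ih i X h' z₁ z₂ zs (hg i X h') (h₁ i X h') (h₂ i X h')
    · rw [h'] at h
      cases h
      exact ih' j A h' z₁ z₂ zs (hg' j A h') (h₁' j A h') (h₂' j A h')
  · rintro xs x X ih z₁ z₂ zs ⟨hX⟩ h₁ h₂
    rw [qSwapAbs_qAbs]
    set x₁ := swapVarS var varsort zs xs z₁ z₂ x
    obtain ⟨u, hu, hfu, hfu'⟩ :=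
      ((Finset.eventually_cocardinal_notMem (hreg := hreg) {x, x₁, z₁, z₂}).and
        ((hX.eventually_qFresh xs).and ((hX.qSwap z₁ z₂ zs).eventually_qFresh xs))).exists
    simp only [Finset.mem_insert, Finset.mem_singleton, not_or] at hu
    obtain ⟨hux, hux₁, hu₁, hu₂⟩ := hu
    have hbody : qSwap z₁ z₂ zs (qSwap u x xs X) = qSwap u x₁ xs (qSwap z₁ z₂ zs X) := by
      rw [qSwap_qSwap_conj, swapVarS_of_ne_of_ne _ _ hu₁ hu₂]
    have hfresh :
        ∀ {z}, u ≠ z → QFreshAbs zs z (.qAbs xs x X) → QFresh zs z (qSwap u x xs X) :=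
      fun hne h => ((qFreshAbs_qAbs_iff_of_qFresh hfu).1 h).resolve_left
        fun he => hne (Prod.mk.inj he).2.symm
    refine .qAbs (by simp [hux, hux₁]) hfu' hfu ?_
    rw [← hbody]
    exact ih u x xs z₁ z₂ zs (hX.qSwap u x xs) (hfresh hu₁ h₁) (hfresh hu₂ h₂)

theorem alpha_qSwap_of_qFresh (hreg : (Cardinal.mk var).IsRegular)
    {X : QTerm var varsort index bindex opsym} (hX : QGood X) {z₁ z₂ : var} {zs : varsort}
    (h₁ : QFresh zs z₁ X) (h₂ : QFresh zs z₂ X) : Alpha (qSwap z₁ z₂ zs X) X :=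
  (alpha_qSwap_of_qFresh_and hreg).1 X z₁ z₂ zs hX h₁ h₂

/-- `qSwap u x X ≈ qSwap u y (qSwap y x X) ≈ qSwap u y (qSwap y x' X') ≈ qSwap u x' X'` for the
witness `y` of `h`. Transitivity is only assumed for chains starting at `W`, so that the lemma can
be used inside the proof of transitivity. -/
theorem alpha_qSwap_of_alphaAbs (hreg : (Cardinal.mk var).IsRegular)
    {W X X' : QTerm var varsort index bindex opsym} {xs : varsort} {x x' u : var}
    (htrans : ∀ Y Z, Alpha W Y → Alpha Y Z → Alpha W Z) (hX : QGood X) (hX' : QGood X')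
    (h : AlphaAbs (.qAbs xs x X) (.qAbs xs x' X')) (hu : u ∉ ({x, x'} : Set var))
    (hfu : QFresh xs u X) (hfu' : QFresh xs u X') (hW : Alpha W (qSwap u x xs X)) :
    Alpha W (qSwap u x' xs X') := by
  obtain @⟨_, _, _, _, _, y, hy, hfy, hfy', hbody⟩ := h
  simp only [Set.mem_insert_iff, Set.mem_singleton_iff, not_or] at hu hy
  have h₁ : Alpha (qSwap u x xs X) (qSwap u y xs (qSwap y x xs X)) := by
    rw [qSwap_qSwap_of_ne (Ne.symm hu.1) (Ne.symm hy.1)]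
    exact (alpha_qSwap_of_qFresh hreg hX hfu hfy).symm.qSwap u x xs
  have h₂ := hbody.qSwap u y xs
  have h₃ : Alpha (qSwap u y xs (qSwap y x' xs X')) (qSwap u x' xs X') := by
    rw [qSwap_qSwap_of_ne (Ne.symm hu.2) (Ne.symm hy.2)]
    exact (alpha_qSwap_of_qFresh hreg hX' hfu' hfy').qSwap u x' xs
  exact htrans _ _ (htrans _ _ (htrans _ _ hW h₁) h₂) h₃

theorem alpha_trans_and (hreg : (Cardinal.mk var).IsRegular) :
    (∀ X : QTerm var varsort index bindex opsym, QGood X →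
      ∀ Y Z, Alpha X Y → Alpha Y Z → Alpha X Z) ∧
    (∀ A : QAbs var varsort index bindex opsym, QGoodAbs A →
      ∀ B C, AlphaAbs A B → AlphaAbs B C → AlphaAbs A C) := by
  apply QTerm.swap_induction
  · rintro xs x - Y Z ⟨⟩ h
    exact h
  · intro d inp binp ih ih' hg Y Z h₁ h₂
    cases hg with | qOp hg hg' _ _ => ?_
    cases h₁ with | qOp hd hc hbd hbc => ?_
    cases h₂ with | qOp hd' hc' hbd' hbc' => ?_
    refine .qOp (fun i => (hd i).trans (hd' i)) (fun i X Z h h'' => ?_)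
      (fun j => (hbd j).trans (hbd' j)) (fun j A C h h'' => ?_)
    · obtain ⟨Y, h'⟩ := Option.ne_none_iff_exists'.1 fun hn => by simp [(hd i).2 hn] at h
      exact ih i X h (hg i X h) Y Z (hc i X Y h h') (hc' i Y Z h' h'')
    · obtain ⟨B, h'⟩ := Option.ne_none_iff_exists'.1 fun hn => by simp [(hbd j).2 hn] at h
      exact ih' j A h (hg' j A h) B C (hbc j A B h h') (hbc' j B C h' h'')
  · rintro xs x X ih ⟨hX⟩ B C h₁ h₂
    obtain @⟨_, _, x', _, X', _, _, _, _, hα⟩ := id h₁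
    obtain @⟨_, _, x'', _, X'', _, _, _, _, hα'⟩ := id h₂
    have hX' : QGood X' := qGood_qSwap_iff.1 (hα.qGood (hX.qSwap _ _ _))
    have hX'' : QGood X'' := qGood_qSwap_iff.1 (hα'.qGood (hX'.qSwap _ _ _))
    obtain ⟨u, hu, hfu, hfu', hfu''⟩ :=
      ((Finset.eventually_cocardinal_notMem (hreg := hreg) {x, x', x''}).and
        ((hX.eventually_qFresh xs).and
          ((hX'.eventually_qFresh xs).and (hX''.eventually_qFresh xs)))).exists
    simp only [Finset.mem_insert, Finset.mem_singleton, not_or] at hu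
    have htrans := ih u x xs (hX.qSwap u x xs)
    have h₁' := alpha_qSwap_of_alphaAbs hreg htrans hX hX' h₁ (by simp [hu.1, hu.2.1])
      hfu hfu' (alpha_refl hreg (hX.qSwap u x xs))
    exact .qAbs (by simp [hu.1, hu.2.2]) hfu hfu''
      (alpha_qSwap_of_alphaAbs hreg htrans hX' hX'' h₂ (by simp [hu.2.1, hu.2.2]) hfu' hfu''
        h₁')

theorem Alpha.trans (hreg : (Cardinal.mk var).IsRegular)
    {X Y Z : QTerm var varsort index bindex opsym} (hX : QGood X) (h₁ : Alpha X Y)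
    (h₂ : Alpha Y Z) : Alpha X Z :=
  (alpha_trans_and hreg).1 X hX Y Z h₁ h₂

theorem AlphaAbs.trans (hreg : (Cardinal.mk var).IsRegular)
    {A B C : QAbs var varsort index bindex opsym} (hA : QGoodAbs A) (h₁ : AlphaAbs A B)
    (h₂ : AlphaAbs B C) : AlphaAbs A C :=
  (alpha_trans_and hreg).2 A hA B C h₁ h₂

theorem AlphaAbs.qGoodAbs {A B : QAbs var varsort index bindex opsym} (h : AlphaAbs A B)
    (hA : QGoodAbs A) : QGoodAbs B := by
  obtain ⟨-, -, -, hα⟩ := h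
  obtain ⟨hX⟩ := hA
  exact .qAbs (qGood_qSwap_iff.1 (hα.qGood (hX.qSwap _ _ _)))

theorem Relation.EqvGen.rel_of_pred {α : Type u} {r : α → α → Prop} {p : α → Prop}
    (hp : ∀ a b, r a b → p a → p b) (hrefl : ∀ a, p a → r a a)
    (hsymm : ∀ a b, r a b → r b a) (htrans : ∀ a b c, p a → r a b → r b c → r a c) {a b : α}
    (h : Relation.EqvGen r a b)
    (ha : p a) : r a b := by
  suffices (p a ↔ p b) ∧ (p a → r a b) from this.2 ha
  clear ha
  induction h with
  | rel x y h => exact ⟨⟨hp x y h, hp y x (hsymm x y h)⟩, fun _ => h⟩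
  | refl x => exact ⟨Iff.rfl, hrefl x⟩
  | symm x y _ ih => exact ⟨ih.1.symm, fun hy => hsymm x y (ih.2 (ih.1.2 hy))⟩
  | trans x y z _ _ ih ih' =>
    exact ⟨ih.1.trans ih'.1, fun hx => htrans x y z hx (ih.2 hx) (ih'.2 (ih.1.1 hx))⟩

theorem tmk_eq_tmk_iff (hreg : (Cardinal.mk var).IsRegular)
    {P Q : QTerm var varsort index bindex opsym} (hP : QGood P) :
    tmk P = tmk Q ↔ Alpha P Q :=
  ⟨fun h => (Quot.eqvGen_exact h).rel_of_pred (r := Alpha) (fun _ _ => Alpha.qGood)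
      (fun _ => alpha_refl hreg) (fun _ _ => Alpha.symm) (fun _ _ _ => Alpha.trans hreg) hP,
    Quot.sound⟩

theorem amk_eq_amk_iff (hreg : (Cardinal.mk var).IsRegular)
    {P Q : QAbs var varsort index bindex opsym} (hP : QGoodAbs P) :
    amk P = amk Q ↔ AlphaAbs P Q :=
  ⟨fun h => (Quot.eqvGen_exact h).rel_of_pred (r := AlphaAbs) (fun _ _ => AlphaAbs.qGoodAbs)
      (alpha_refl_and hreg).2 (fun _ _ => AlphaAbs.symm) (fun _ _ _ => AlphaAbs.trans hreg) hP,
    Quot.sound⟩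

section Abstraction

variable {xs xs' : varsort} {x x' : var} {X X' : QTerm var varsort index bindex opsym}

theorem alphaAbs_qAbs_iff :
    AlphaAbs (.qAbs xs x X) (.qAbs xs' x' X') ↔
      xs = xs' ∧ ∃ y, y ∉ ({x, x'} : Set var) ∧ QFresh xs y X ∧ QFresh xs y X' ∧
        Alpha (qSwap y x xs X) (qSwap y x' xs X') := by
  constructor
  · rintro ⟨hy, hf, hf', h⟩
    exact ⟨rfl, _, hy, hf, hf', h⟩
  · rintro ⟨rfl, y, hy, hf, hf', h⟩
    exact .qAbs hy hf hf' h

theorem alphaAbs_qAbs_iff_forall (hreg : (Cardinal.mk var).IsRegular) (hX : QGood X)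
    (hX' : QGood X') :
    AlphaAbs (.qAbs xs x X) (.qAbs xs' x' X') ↔
      xs = xs' ∧ ∀ y, y ∉ ({x, x'} : Set var) → QFresh xs y X → QFresh xs y X' →
        Alpha (qSwap y x xs X) (qSwap y x' xs X') := by
  constructor
  · intro h
    obtain ⟨rfl, -⟩ := alphaAbs_qAbs_iff.1 h
    refine ⟨rfl, fun y hy hf hf' => ?_⟩
    exact alpha_qSwap_of_alphaAbs hreg (fun _ _ => Alpha.trans hreg (hX.qSwap y x xs)) hX hX' h
      hy hf hf' (alpha_refl hreg (hX.qSwap y x xs))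
  · rintro ⟨rfl, h⟩
    obtain ⟨y, hy, hf, hf'⟩ :=
      ((Finset.eventually_cocardinal_notMem (hreg := hreg) {x, x'}).and
        ((hX.eventually_qFresh xs).and (hX'.eventually_qFresh xs))).exists
    have hy' : y ∉ ({x, x'} : Set var) := by simpa using hy
    exact .qAbs hy' hf hf' (h y hy' hf hf')

end Abstraction

/-- for good terms `X`, `X'`, the equality of the abstractions
`Abs xs x X` and `Abs xs' x' X'` is equivalent both to the exists-fresh swapping
condition and to the forall-fresh swapping condition. -/
theorem abs_eq_iff_swap (hinf : Cardinal.aleph0 ≤ Cardinal.mk var)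
    (hreg : (Cardinal.mk var).IsRegular)
    (X X' : Term var varsort index bindex opsym) (hX : good X) (hX' : good X')
    (xs xs' : varsort) (x x' : var) :
    ((Abs xs x X = Abs xs' x' X') ↔
      (xs = xs' ∧ ∃ y, y ∉ ({x, x'} : Set var) ∧ fresh xs y X ∧ fresh xs y X' ∧
        tswap X y x xs = tswap X' y x' xs)) ∧
    ((Abs xs x X = Abs xs' x' X') ↔
      (xs = xs' ∧ ∀ y, y ∉ ({x, x'} : Set var) → fresh xs y X → fresh xs y X' →
        tswap X y x xs = tswap X' y x' xs)) := by
  have habs : Abs xs x X = Abs xs' x' X' ↔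
      AlphaAbs (.qAbs xs x (trep X)) (.qAbs xs' x' (trep X')) :=
    amk_eq_amk_iff hreg (.qAbs hX)
  have hswap : ∀ y, tswap X y x xs = tswap X' y x' xs ↔
      Alpha (qSwap y x xs (trep X)) (qSwap y x' xs (trep X')) :=
    fun y => tmk_eq_tmk_iff hreg (QGood.qSwap hX y x xs)
  simp only [habs, hswap, fresh]
  exact ⟨alphaAbs_qAbs_iff, alphaAbs_qAbs_iff_forall hreg hX hX'⟩

end Binding
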